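/- Let p ≥ 1 and 1 ≤ m ≤ p be integers, let λ₀ ∈ ℂ, and let B be a p×p matrix of complex-valued functions, each analytic in a neighbourhood of λ₀. If the rank of the matrix B(λ₀) is at most p − m, then the j-th derivative of the function λ ↦ det B(λ) vanishes at λ₀ for every 0 ≤ j ≤ m − 1; that is, det B(λ) has a zero of order at least m at λ₀. -/

import Mathlib

/-!
Choose a basis of `ℂ^p` of which `p - rank B(z₀)` vectors span the kernel of `B(z₀)`, and let
`P` be the (invertible, constant) change-of-basis matrix. The corresponding columns of `B(z) P`
vanish at `z₀`, so each of them is `(z - z₀)` times an analytic column; pulling these factors out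
of the determinant gives `det B(z) · det P = (z - z₀)^(p - rank B(z₀)) · g(z)` with `g` analytic.
-/

open Finset Filter Matrix Module

section Analytic

variable {𝕜 : Type*} [NontriviallyNormedField 𝕜] {z₀ : 𝕜}

theorem AnalyticAt.dslope {E : Type*} [NormedAddCommGroup E] [NormedSpace 𝕜 E] {f : 𝕜 → E}
    (hf : AnalyticAt 𝕜 f z₀) : AnalyticAt 𝕜 (dslope f z₀) z₀ :=
  let ⟨_, hp⟩ := hf
  ⟨_, hp.has_fpower_series_dslope_fslope⟩

theorem analyticOrderAt_mul_const {f : 𝕜 → 𝕜} {c : 𝕜} (hf : AnalyticAt 𝕜 f z₀) (hc : c ≠ 0) :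
    analyticOrderAt (fun z => f z * c) z₀ = analyticOrderAt f z₀ := by
  have hconst : analyticOrderAt (fun _ : 𝕜 => c) z₀ = 0 :=
    analyticOrderAt_eq_zero.2 (Or.inr hc)
  rw [show (fun z => f z * c) = f * fun _ => c from rfl,
    analyticOrderAt_mul hf analyticAt_const, hconst, add_zero]

variable {n : Type*} [Fintype n] {A : 𝕜 → Matrix n n 𝕜}

theorem Matrix.analyticAt_mul_const_apply (hA : ∀ i j, AnalyticAt 𝕜 (fun z => A z i j) z₀)
    (P : Matrix n n 𝕜) (i j : n) : AnalyticAt 𝕜 (fun z => (A z * P) i j) z₀ := by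
  simp only [mul_apply]
  exact Finset.analyticAt_fun_sum _ fun k _ => (hA i k).mul analyticAt_const

variable [DecidableEq n]

theorem Matrix.analyticAt_det (hA : ∀ i j, AnalyticAt 𝕜 (fun z => A z i j) z₀) :
    AnalyticAt 𝕜 (fun z => (A z).det) z₀ := by
  simp only [det_apply']
  exact Finset.analyticAt_fun_sum _ fun σ _ =>
    analyticAt_const.mul (Finset.analyticAt_fun_prod _ fun i _ => hA (σ i) i)

theorem Matrix.natCast_card_le_analyticOrderAt_det (s : Finset n)
    (hA : ∀ i j, AnalyticAt 𝕜 (fun z => A z i j) z₀) (hs : ∀ i, ∀ j ∈ s, A z₀ i j = 0) :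
    (#s : ℕ∞) ≤ analyticOrderAt (fun z => (A z).det) z₀ := by
  set E : 𝕜 → Matrix n n 𝕜 := fun z =>
    of fun i j => if j ∈ s then dslope (fun w => A w i j) z₀ z else A z i j
  have hE : ∀ i j, AnalyticAt 𝕜 (fun z => E z i j) z₀ := by
    intro i j
    by_cases hj : j ∈ s
    · simpa [E, hj] using (hA i j).dslope
    · simpa [E, hj] using hA i j
  have hfactor : ∀ z, A z = of fun i j => (if j ∈ s then z - z₀ else 1) * E z i j := by
    intro z
    ext i j
    by_cases hj : j ∈ s
    · simpa [E, hj, hs i j hj] using (sub_smul_dslope (fun w => A w i j) z₀ z).symm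
    · simp [E, hj]
  refine (natCast_le_analyticOrderAt (analyticAt_det hA)).2
    ⟨fun z => (E z).det, analyticAt_det hE, Eventually.of_forall fun z => ?_⟩
  rw [hfactor z, det_mul_row, Fintype.prod_ite_mem, prod_const, smul_eq_mul]

end Analytic

section LinearAlgebra

variable {K V : Type*} [Field K] [AddCommGroup V] [Module K V] [FiniteDimensional K V]

theorem Submodule.exists_basis_finset_mem (U : Submodule K V) {n : Type*} [Fintype n]
    (hn : Fintype.card n = finrank K V) :
    ∃ (b : Basis n K V) (s : Finset n), #s = finrank K U ∧ ∀ j ∈ s, b j ∈ U := by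
  obtain ⟨W, hUW⟩ := U.exists_isCompl
  let b₀ := ((finBasis K U).prod (finBasis K W)).map (U.prodEquivOfIsCompl W hUW)
  obtain ⟨e⟩ : Nonempty (Fin (finrank K U) ⊕ Fin (finrank K W) ≃ n) :=
    ⟨Fintype.equivOfCardEq (by simp [hn, U.finrank_add_eq_of_isCompl hUW])⟩
  refine ⟨b₀.reindex e, univ.map (Function.Embedding.inl.trans e.toEmbedding), by simp, ?_⟩
  simp [b₀, Basis.map_apply, Basis.prod_apply]

theorem Matrix.exists_isUnit_det_mul_apply_eq_zero {n : Type*} [Fintype n] [DecidableEq n]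
    (A : Matrix n n K) : ∃ P : Matrix n n K, IsUnit P.det ∧
      ∃ s : Finset n, A.rank + #s = Fintype.card n ∧ ∀ i, ∀ j ∈ s, (A * P) i j = 0 := by
  obtain ⟨b, s, hs, hb⟩ := (LinearMap.ker A.mulVecLin).exists_basis_finset_mem (n := n) (by simp)
  refine ⟨(Pi.basisFun K n).toMatrix b, ?_, s, ?_, fun i j hj => ?_⟩
  · have := (Pi.basisFun K n).invertibleToMatrix b
    exact isUnit_det_of_invertible _
  · rw [hs, rank, LinearMap.finrank_range_add_finrank_ker, finrank_fintype_fun_eq_card]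
  · simpa [mul_apply, mulVec, dotProduct, Basis.toMatrix_apply] using congrFun (hb j hj) i

end LinearAlgebra

theorem stmt10_general (p m : ℕ) (hmp : m ≤ p) (z₀ : ℂ)
    (B : ℂ → Matrix (Fin p) (Fin p) ℂ)
    (hB : ∀ i j, AnalyticAt ℂ (fun z => B z i j) z₀)
    (hrank : (B z₀).rank ≤ p - m) :
    ∀ j < m, iteratedDeriv j (fun z => (B z).det) z₀ = 0 := by
  obtain ⟨P, hP, s, hs, hBP⟩ := (B z₀).exists_isUnit_det_mul_apply_eq_zero
  have hm : m ≤ #s := by simp only [Fintype.card_fin] at hs; omega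
  have horder : (#s : ℕ∞) ≤ analyticOrderAt (fun z => (B z).det) z₀ := by
    simpa only [det_mul, analyticOrderAt_mul_const (analyticAt_det hB) hP.ne_zero] using
      natCast_card_le_analyticOrderAt_det s (analyticAt_mul_const_apply hB P) hBP
  rw [← natCast_le_analyticOrderAt_iff_iteratedDeriv_eq_zero (analyticAt_det hB)]
  exact le_trans (by exact_mod_cast hm) horder

/-- Key step in the proof of Lemma 5.1: if an analytic matrix family has rank
at most p - m at z₀, then its determinant has a zero of order at least m
there. -/
theorem stmt10 (p m : ℕ) (hp : 1 ≤ p) (hm : 1 ≤ m) (hmp : m ≤ p) (z₀ : ℂ)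
    (B : ℂ → Matrix (Fin p) (Fin p) ℂ)
    (hB : ∀ i j, AnalyticAt ℂ (fun z => B z i j) z₀)
    (hrank : (B z₀).rank ≤ p - m) :
    ∀ j < m, iteratedDeriv j (fun z => (B z).det) z₀ = 0 :=
  stmt10_general p m hmp z₀ B hB hrank
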